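/- arXiv:1906.04147 — 5 statements merged into one kernel-verified Lean document; each statement's English description precedes it below -/
import Mathlib

section
/- Let F be a free group and let a, b ∈ F be elements with ab ≠ ba. Then the subgroup ⟨a, b⟩ generated by a and b is free of rank 2 with basis {a, b}; equivalently, the homomorphism from the free group on two generators to F sending the generators to a and b respectively is injective. -/
/-!
By Nielsen–Schreier, `H = ⟨a, b⟩` is free; as `a` and `b` do not commute, its basis has at least
two elements, so `H` surjects onto `F₂`. Composing with the surjection `F₂ → H` sending the
generators to `a` and `b` gives a surjective endomorphism of `F₂`, which is injective because
`F₂` is finitely generated and residually finite (Mal'cev). Residual finiteness of free groups: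
a reduced word `w` of length `n` is sent to a permutation of `{0, …, n}` moving `n` to `0`, the
generator `x` acting by a permutation that steps across every occurrence of `x^{±1}` in `w`;
reducedness is exactly what makes these partial steps injective.
-/

open Function

namespace FreeGroup

variable {α : Type*}

section WordPerm

variable (w : List (α × Bool))

/-- The letter `w[k]` joins the positions `k` and `k + 1`. The permutation of the generator
`w[k].1` sends `letterEnd w true k` to `letterEnd w false k`, i.e. `k + 1 ↦ k` for a positive
letter and `k ↦ k + 1` for a negative one. -/
def letterEnd (c : Bool) (k : Fin w.length) : Fin (w.length + 1) :=
  bif w[k].2 == c then k.succ else k.castSucc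

variable {w}

theorem letterEnd_injective (hw : IsReduced w) (c : Bool) (x : α) :
    Injective fun k : {k : Fin w.length // w[k].1 = x} ↦ letterEnd w c k := by
  rintro ⟨⟨k, hk⟩, hkx⟩ ⟨⟨l, hl⟩, hlx⟩ h
  simp only [Fin.getElem_fin] at hkx hlx
  simp only [Subtype.mk.injEq, Fin.mk.injEq]
  cases hbk : w[k].2 == c <;> cases hbl : w[l].2 == c <;>
    simp only [letterEnd, Fin.getElem_fin, hbk, hbl, cond_true, cond_false, Fin.ext_iff,
      Fin.val_succ, Fin.val_castSucc] at h
  · omega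
  · subst h
    have := List.IsChain.getElem hw l hk (hlx.trans hkx.symm)
    simp_all
  · subst h
    have := List.IsChain.getElem hw k hl (hkx.trans hlx.symm)
    simp_all
  · omega

noncomputable def letterPerm (hw : IsReduced w) (x : α) : Equiv.Perm (Fin (w.length + 1)) :=
  (Equiv.Perm.exists_extending_pair _ _ (letterEnd_injective hw true x)
    (letterEnd_injective hw false x)).choose

theorem letterPerm_letterEnd (hw : IsReduced w) (k : Fin w.length) :
    letterPerm hw w[k].1 (letterEnd w true k) = letterEnd w false k :=
  (Equiv.Perm.exists_extending_pair _ _ (letterEnd_injective hw true _)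
    (letterEnd_injective hw false _)).choose_spec ⟨k, rfl⟩

noncomputable def wordPermHom (hw : IsReduced w) :
    FreeGroup α →* Equiv.Perm (Fin (w.length + 1)) :=
  lift (letterPerm hw)

theorem wordPermHom_letter_succ (hw : IsReduced w) (k : Fin w.length) :
    wordPermHom hw (mk [w[k]]) k.succ = k.castSucc := by
  have h := letterPerm_letterEnd hw k
  cases hb : w[k].2 <;> simp only [letterEnd, hb] at h <;>
    simp only [wordPermHom, lift_mk, List.map_cons, List.map_nil, List.prod_singleton, hb]
  · simpa [Equiv.symm_apply_eq] using h.symm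
  · simpa using h

theorem wordPermHom_mk_take (hw : IsReduced w) {j : ℕ} (hj : j ≤ w.length) :
    wordPermHom hw (mk (w.take j)) ⟨j, Nat.lt_succ_of_le hj⟩ = 0 := by
  induction j with
  | zero => simp [← one_eq_mk]
  | succ j ih =>
    have hstep := wordPermHom_letter_succ hw ⟨j, hj⟩
    simp only [Fin.getElem_fin, Fin.succ_mk, Fin.castSucc_mk] at hstep
    rw [List.take_succ_eq_append_getElem hj, ← mul_mk, _root_.map_mul, Equiv.Perm.mul_apply,
      hstep, ih (Nat.le_of_succ_le hj)]

theorem wordPermHom_toWord_ne_one [DecidableEq α] {g : FreeGroup α} (hg : g ≠ 1) :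
    wordPermHom (isReduced_toWord (x := g)) g ≠ 1 := by
  intro h
  have hn := wordPermHom_mk_take (isReduced_toWord (x := g)) le_rfl
  rw [List.take_length, mk_toWord, h] at hn
  exact hg (toWord_eq_nil_iff.1 (List.eq_nil_of_length_eq_zero (by simpa [Fin.ext_iff] using hn)))

end WordPerm

instance : Group.ResiduallyFinite (FreeGroup α) := by
  classical
  exact Group.residuallyFinite_of_forall_exists_finite_monoidHom fun g hg ↦
    ⟨_, _, inferInstance, wordPermHom isReduced_toWord, wordPermHom_toWord_ne_one hg⟩

theorem mul_comm_of_subsingleton [Subsingleton α] (u v : FreeGroup α) : u * v = v * u := by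
  have := Subgroup.isMulCommutative_closure (k := Set.range (of : α → FreeGroup α))
    (by rintro _ ⟨x, rfl⟩ _ ⟨y, rfl⟩; rw [Subsingleton.elim x y])
  rw [closure_range_of] at this
  simpa using
    congrArg Subtype.val (mul_comm' (⟨u, trivial⟩ : (⊤ : Subgroup (FreeGroup α))) ⟨v, trivial⟩)

end FreeGroup

theorem IsFreeGroup.nontrivial_generators {G : Type*} [Group G] [IsFreeGroup G] {a b : G}
    (hab : a * b ≠ b * a) : Nontrivial (IsFreeGroup.Generators G) := by
  by_contra h
  have := not_nontrivial_iff_subsingleton.1 h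
  apply hab
  apply (IsFreeGroup.toFreeGroup G).injective
  simp only [map_mul, FreeGroup.mul_comm_of_subsingleton]

theorem Group.FG.finite_monoidHom {G K : Type*} [Group G] [Group.FG G] [Group K] [Finite K] :
    Finite (G →* K) := by
  obtain ⟨S, hS⟩ := Group.FG.out (G := G)
  exact Finite.of_injective (fun χ : G →* K ↦ fun s : S ↦ χ s) fun χ χ' h ↦
    MonoidHom.eq_of_eqOn_dense hS fun s hs ↦ congrFun h ⟨s, hs⟩

theorem Group.ResiduallyFinite.injective_of_surjective_endomorphism {G : Type*} [Group G]
    [Group.FG G] [Group.ResiduallyFinite G] {ψ : G →* G} (hψ : Surjective ψ) : Injective ψ := by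
  refine (injective_iff_map_eq_one ψ).2 fun g hg ↦ by_contra fun hg1 ↦ ?_
  obtain ⟨N, hgN⟩ := Group.exists_finiteIndexNormalSubgroup_notMem g hg1
  have : Finite (G ⧸ N.toSubgroup) := Subgroup.finiteIndex_iff_finite_quotient.1 inferInstance
  have : Finite (G →* G ⧸ N.toSubgroup) := Group.FG.finite_monoidHom
  -- precomposition with `ψ` is injective on the finite set `Hom(G, G ⧸ N)`, hence surjective
  have hcomp : Injective fun χ : G →* G ⧸ N.toSubgroup ↦ χ.comp ψ :=
    fun _ _ h ↦ (MonoidHom.cancel_right hψ).1 h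
  obtain ⟨χ, hχ⟩ := Finite.injective_iff_surjective.1 hcomp (QuotientGroup.mk' N.toSubgroup)
  apply hgN
  rw [← FiniteIndexNormalSubgroup.mem_toSubgroup_iff, ← QuotientGroup.eq_one_iff,
    ← QuotientGroup.mk'_apply, ← hχ]
  simp [hg]

theorem exists_surjective_fin_two {β : Type*} [Nontrivial β] : ∃ f : β → Fin 2, Surjective f := by
  classical
  obtain ⟨x, y, hxy⟩ := exists_pair_ne β
  refine ⟨fun z ↦ if z = x then 0 else 1, fun i ↦ ?_⟩
  fin_cases i
  exacts [⟨x, if_pos rfl⟩, ⟨y, if_neg hxy.symm⟩]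

/-- Two non-commuting elements of a free group generate a free group of rank two:
the homomorphism from the free group on two generators sending the generators to
`a` and `b` is injective. -/
theorem noncommuting_generate_free {α : Type*} (a b : FreeGroup α)
    (hab : a * b ≠ b * a) :
    Function.Injective (FreeGroup.lift (![a, b] : Fin 2 → FreeGroup α)) := by
  set φ := FreeGroup.lift (![a, b] : Fin 2 → FreeGroup α)
  have hφ : φ.rangeRestrict (.of 0) * φ.rangeRestrict (.of 1) ≠
      φ.rangeRestrict (.of 1) * φ.rangeRestrict (.of 0) :=
    fun h ↦ hab (by simpa [φ] using congrArg Subtype.val h)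
  have := IsFreeGroup.nontrivial_generators hφ
  obtain ⟨f, hf⟩ := exists_surjective_fin_two (β := IsFreeGroup.Generators φ.range)
  let ψ : FreeGroup (Fin 2) →* FreeGroup (Fin 2) :=
    (FreeGroup.map f).comp ((IsFreeGroup.toFreeGroup φ.range).toMonoidHom.comp φ.rangeRestrict)
  have hψ : Surjective ψ := by
    simp only [ψ, MonoidHom.coe_comp, MulEquiv.coe_toMonoidHom]
    exact (FreeGroup.map_surjective hf).comp
      ((MulEquiv.surjective _).comp φ.rangeRestrict_surjective)
  have hψ_inj := Group.ResiduallyFinite.injective_of_surjective_endomorphism hψ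
  exact MonoidHom.rangeRestrict_injective_iff.1 (Injective.of_comp (Injective.of_comp hψ_inj))
end

section
/- Let F be a free group of rank at least 2, Φ an automorphism of F, and c ∈ F an element with Φ(c) ≠ c. Then Fix(Φ) ∩ c · Fix(Φ) · c⁻¹ is either trivial or an infinite cyclic root-closed subgroup of F. -/
/-- The subgroup of points fixed by an automorphism. -/
def fixedSubgroup {G : Type*} [Group G] (Φ : MulAut G) : Subgroup G where
  carrier := {x | Φ x = x}
  one_mem' := by simp
  mul_mem' := by
    intro a b ha hb
    simp only [Set.mem_setOf_eq] at *
    rw [map_mul, ha, hb]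
  inv_mem' := by
    intro a ha
    simp only [Set.mem_setOf_eq] at *
    rw [map_inv, ha]

/-- A subgroup is root-closed if `x ^ k ∈ H` for `k ≠ 0` implies `x ∈ H`. -/
def IsRootClosed {G : Type*} [Group G] (H : Subgroup G) : Prop :=
  ∀ (x : G) (k : ℤ), k ≠ 0 → x ^ k ∈ H → x ∈ H

/-!
Conjugation by `c` carries `Fix Φ` to `Fix (i_c ∘ Φ ∘ i_c⁻¹) = Fix (i_g ∘ Φ)` with
`g = c Φ(c)⁻¹ ≠ 1`, and an element fixed by both `Φ` and `i_g ∘ Φ` commutes with `g`. By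
Nielsen–Schreier the centralizer of `g` is free, and its centre contains `g ≠ 1`; a free group with
nontrivial centre has rank at most one, so the centralizer, and with it the intersection, is cyclic.
Root-closedness follows from unique roots in the torsion-free group `F`: fixed subgroups are
root-closed, hence so is their intersection.
-/

namespace FreeGroup

theorem center_eq_bot {β : Type*} [Nontrivial β] : Subgroup.center (FreeGroup β) = ⊥ := by
  classical
  -- If `z` is central and its reduced word starts with `a`, pick `b ≠ a`: then `b z` is reduced
  -- of length `|z| + 1`, while the word of `z b` is a sublist of `z ++ [b]`, so the two coincide
  -- and their first letters force `b = a`.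
  refine (Subgroup.eq_bot_iff_forall _).mpr fun z hz => ?_
  by_contra hz1
  obtain ⟨⟨a, s⟩, t, hzw⟩ := List.exists_cons_of_ne_nil (mt toWord_eq_nil_iff.mp hz1)
  obtain ⟨b, hba⟩ := exists_ne a
  have hleft : (of b * z).toWord = (b, true) :: z.toWord := by
    rw [toWord_mul, toWord_of, List.singleton_append, IsReduced.reduce_eq]
    rw [hzw, isReduced_cons_cons, ← hzw]
    exact ⟨fun h => absurd h hba, isReduced_toWord⟩
  have hsub : ((b, true) :: z.toWord).Sublist (z.toWord ++ [(b, true)]) := by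
    rw [← hleft, Subgroup.mem_center_iff.mp hz, ← toWord_of]
    exact toWord_mul_sublist z (of b)
  have heq := hsub.eq_of_length (by simp)
  rw [hzw] at heq
  exact hba (Prod.ext_iff.mp (List.cons.inj heq).1).1

end FreeGroup

namespace IsFreeGroup

variable {G : Type*} [Group G] [IsFreeGroup G]

theorem isCyclic_of_mem_center {z : G} (hz : z ≠ 1) (hcenter : z ∈ Subgroup.center G) :
    IsCyclic G := by
  let e := toFreeGroup G
  rw [e.isCyclic]
  rcases subsingleton_or_nontrivial (Generators G) with _ | _
  · rcases isEmpty_or_nonempty (Generators G) with _ | ⟨⟨x⟩⟩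
    · infer_instance
    · have : Unique (Generators G) := uniqueOfSubsingleton x
      infer_instance
  · have hez : e z ∈ Subgroup.center (FreeGroup (Generators G)) :=
      Subgroup.mem_center_iff.mpr fun w => by
        simpa using congrArg e (Subgroup.mem_center_iff.mp hcenter (e.symm w))
    rw [FreeGroup.center_eq_bot, Subgroup.mem_bot, map_eq_one_iff e e.injective] at hez
    exact absurd hez hz

theorem isCyclic_centralizer {g : G} (hg : g ≠ 1) : IsCyclic (Subgroup.centralizer {g}) :=
  isCyclic_of_mem_center (z := ⟨g, Subgroup.mem_centralizer_singleton_iff.mpr rfl⟩)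
    (by simpa using hg) <| Subgroup.mem_center_iff.mpr fun w =>
      Subtype.ext (Subgroup.mem_centralizer_singleton_iff.mp w.2)

end IsFreeGroup

section

variable {G : Type*} [Group G]

theorem map_fixedSubgroup (σ Φ : MulAut G) :
    (fixedSubgroup Φ).map σ.toMonoidHom = fixedSubgroup (σ * Φ * σ⁻¹) := by
  ext x
  rw [Subgroup.mem_map_equiv]
  change Φ (σ.symm x) = σ.symm x ↔ σ (Φ (σ.symm x)) = x
  exact σ.eq_symm_apply

theorem MulAut.conj_mul_mul_conj_inv (c : G) (Φ : MulAut G) :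
    MulAut.conj c * Φ * (MulAut.conj c)⁻¹ = MulAut.conj (c * (Φ c)⁻¹) * Φ := by
  ext x
  simp [mul_assoc]

theorem inf_fixedSubgroup_conj_mul_le_centralizer (g : G) (Φ : MulAut G) :
    fixedSubgroup Φ ⊓ fixedSubgroup (MulAut.conj g * Φ) ≤ Subgroup.centralizer {g} := by
  rintro x ⟨hΦ, hgΦ⟩
  change Φ x = x at hΦ
  change g * Φ x * g⁻¹ = x at hgΦ
  rw [hΦ, mul_inv_eq_iff_eq_mul] at hgΦ
  exact Subgroup.mem_centralizer_singleton_iff.mpr hgΦ.symm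

theorem IsRootClosed.inf {H K : Subgroup G} (hH : IsRootClosed H) (hK : IsRootClosed K) :
    IsRootClosed (H ⊓ K) :=
  fun x k hk hx => ⟨hH x k hk hx.1, hK x k hk hx.2⟩

theorem isRootClosed_fixedSubgroup [IsMulTorsionFree G] (Φ : MulAut G) :
    IsRootClosed (fixedSubgroup Φ) :=
  fun x k hk hx => (zpow_left_inj hk).mp ((map_zpow Φ x k).symm.trans hx)

theorem Subgroup.eq_bot_or_exists_ne_one_eq_zpowers (H : Subgroup G) [IsCyclic H] :
    H = ⊥ ∨ ∃ d : G, d ≠ 1 ∧ H = Subgroup.zpowers d := by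
  obtain ⟨d, rfl⟩ := H.isCyclic_iff_exists_zpowers_eq_top.mp ‹_›
  exact (eq_or_ne d 1).imp (fun h => by rw [h, Subgroup.zpowers_one_eq_bot]) fun h => ⟨d, h, rfl⟩

end

theorem fix_inter_conj_fix_trivial_or_cyclic_general {α : Type*}
    (Φ : MulAut (FreeGroup α)) (c : FreeGroup α) (hc : Φ c ≠ c) :
    fixedSubgroup Φ ⊓ (fixedSubgroup Φ).map (MulAut.conj c).toMonoidHom = ⊥ ∨
      ((∃ d : FreeGroup α, d ≠ 1 ∧
          fixedSubgroup Φ ⊓ (fixedSubgroup Φ).map (MulAut.conj c).toMonoidHom =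
            Subgroup.zpowers d) ∧
        IsRootClosed
          (fixedSubgroup Φ ⊓ (fixedSubgroup Φ).map (MulAut.conj c).toMonoidHom)) := by
  rw [map_fixedSubgroup, MulAut.conj_mul_mul_conj_inv]
  have hg : c * (Φ c)⁻¹ ≠ 1 := mt mul_inv_eq_one.mp hc.symm
  have := IsFreeGroup.isCyclic_centralizer hg
  have := Subgroup.isCyclic_of_le (inf_fixedSubgroup_conj_mul_le_centralizer (c * (Φ c)⁻¹) Φ)
  refine (Subgroup.eq_bot_or_exists_ne_one_eq_zpowers _).imp_right fun h =>
    ⟨h, (isRootClosed_fixedSubgroup _).inf (isRootClosed_fixedSubgroup _)⟩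

/-- If `Φ` is an automorphism of a free group of rank at least two and `Φ c ≠ c`,
then `Fix Φ ∩ c (Fix Φ) c⁻¹` is trivial or infinite cyclic and root-closed. -/
theorem fix_inter_conj_fix_trivial_or_cyclic {α : Type*} [Nontrivial α]
    (Φ : MulAut (FreeGroup α)) (c : FreeGroup α) (hc : Φ c ≠ c) :
    fixedSubgroup Φ ⊓ (fixedSubgroup Φ).map (MulAut.conj c).toMonoidHom = ⊥ ∨
      ((∃ d : FreeGroup α, d ≠ 1 ∧
          fixedSubgroup Φ ⊓ (fixedSubgroup Φ).map (MulAut.conj c).toMonoidHom =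
            Subgroup.zpowers d) ∧
        IsRootClosed
          (fixedSubgroup Φ ⊓ (fixedSubgroup Φ).map (MulAut.conj c).toMonoidHom)) :=
  fix_inter_conj_fix_trivial_or_cyclic_general Φ c hc
end

section
/- Let F be a free group of rank at least 2 and Φ an automorphism of F whose fixed subgroup Fix(Φ) is nontrivial. Then Fix(Φ) is its own normalizer in F: N_F(Fix(Φ)) = Fix(Φ). -/
/-!
If `g` normalizes `Fix Φ`, then `g⁻¹ Φ(g)` centralizes `Fix Φ`. In a free group the centralizer of
a nontrivial element is a free group with nontrivial centre, hence cyclic; so commuting is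
transitive on nontrivial elements, and when `Fix Φ` is non-abelian this forces `g⁻¹ Φ(g) = 1`.
When `Fix Φ` is abelian and contains `x ≠ 1`, it lies in the cyclic group `C(x)`, whose generator
is fixed by uniqueness of roots; so `Fix Φ = C(x)`. An element normalizing `C(x)` conjugates `x`
to `x ^ k` with `k = ±1`, and `k = -1` is impossible since then `g²`, hence `g`, commutes with `x`.
-/

open Subgroup

namespace FreeGroup

variable {α : Type*}

theorem not_commute_of_ne {a b : α} (hab : a ≠ b) : ¬Commute (of a) (of b) := by
  classical
  intro h
  let φ : FreeGroup α →* Equiv.Perm (Fin 3) :=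
    FreeGroup.lift fun t => if t = a then Equiv.swap 0 1 else if t = b then Equiv.swap 1 2 else 1
  have h0 := DFunLike.congr_fun (h.map φ).eq 0
  simp [φ, hab.symm, Equiv.swap_apply_def] at h0

instance isCyclic_of_subsingleton [Subsingleton α] : IsCyclic (FreeGroup α) := by
  rcases isEmpty_or_nonempty α with hα | ⟨⟨a⟩⟩
  · infer_instance
  · have : Unique α := uniqueOfSubsingleton a
    infer_instance

end FreeGroup

namespace IsFreeGroup

variable {G : Type*} [Group G] [IsFreeGroup G]

theorem isCyclic_of_subsingleton_generators [Subsingleton (Generators G)] : IsCyclic G :=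
  isCyclic_of_surjective (toFreeGroup G).symm (toFreeGroup G).symm.surjective

theorem nontrivial_generators_of_not_isCyclic (hG : ¬IsCyclic G) : Nontrivial (Generators G) := by
  by_contra h
  have := not_nontrivial_iff_subsingleton.mp h
  exact hG isCyclic_of_subsingleton_generators

theorem isCyclic_of_isMulCommutative [IsMulCommutative G] : IsCyclic G := by
  by_contra hG
  obtain ⟨a, b, hab⟩ := nontrivial_generators_of_not_isCyclic hG
  apply FreeGroup.not_commute_of_ne hab
  have : Commute ((toFreeGroup G).symm (.of a)) ((toFreeGroup G).symm (.of b)) := mul_comm' _ _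
  simpa using this.map (toFreeGroup G)

end IsFreeGroup

namespace FreeGroup

variable {α : Type*}

theorem exists_zpowers_of_commute {x y : FreeGroup α} (h : Commute x y) :
    ∃ z, x ∈ zpowers z ∧ y ∈ zpowers z := by
  have : IsMulCommutative (closure {x, y}) := isMulCommutative_closure <| by
    rintro a (rfl | rfl) b (rfl | rfl) <;> first | rfl | exact h | exact h.symm
  obtain ⟨z, hz⟩ := (closure {x, y}).isCyclic_iff_exists_zpowers_eq_top.mp
    IsFreeGroup.isCyclic_of_isMulCommutative
  exact ⟨z, hz ▸ subset_closure (by simp), hz ▸ subset_closure (by simp)⟩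

def exponentSum [DecidableEq α] (t : α) : FreeGroup α →* Multiplicative ℤ :=
  FreeGroup.lift fun s => .ofAdd (if s = t then 1 else 0)

theorem mem_zpowers_of_commute_of {t : α} {c : FreeGroup α} (h : Commute (of t) c) :
    c ∈ zpowers (of t) := by
  classical
  obtain ⟨z, ⟨m, hm⟩, hc⟩ := exists_zpowers_of_commute h
  have hm1 : m * (exponentSum t z).toAdd = 1 := by
    simpa [exponentSum] using congrArg (fun w => (exponentSum t w).toAdd) hm
  have hz : zpowers (of t) = zpowers z := by
    rcases Int.eq_one_or_neg_one_of_mul_eq_one hm1 with rfl | rfl <;> simp [← hm]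
  exact hz ▸ hc

theorem center_eq_bot_s8 [Nontrivial α] : center (FreeGroup α) = ⊥ := by
  classical
  obtain ⟨a, b, hab⟩ := exists_pair_ne α
  refine eq_bot_iff.mpr fun c hc => ?_
  have hcomm (t : α) : Commute (of t) c := mem_center_iff.mp hc (of t)
  obtain ⟨p, rfl⟩ := mem_zpowers_of_commute_of (hcomm a)
  obtain ⟨q, hq⟩ := mem_zpowers_of_commute_of (hcomm b)
  have hp : 0 = p := by
    simpa [exponentSum, hab.symm] using congrArg (fun w => (exponentSum a w).toAdd) hq
  simp [hp]

end FreeGroup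

namespace IsFreeGroup

variable {G : Type*} [Group G] [IsFreeGroup G]

theorem isCyclic_of_center_ne_bot (h : center G ≠ ⊥) : IsCyclic G := by
  by_contra hG
  have := nontrivial_generators_of_not_isCyclic hG
  refine h (eq_bot_iff.mpr fun z hz => ?_)
  have : toFreeGroup G z ∈ center (FreeGroup (Generators G)) :=
    mem_center_iff.mpr fun w => by
      simpa using congrArg (toFreeGroup G) (mem_center_iff.mp hz ((toFreeGroup G).symm w))
  rw [FreeGroup.center_eq_bot_s8, mem_bot, map_eq_one_iff _ (toFreeGroup G).injective] at this
  exact this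

end IsFreeGroup

namespace FreeGroup

variable {α : Type*}

theorem isCyclic_centralizer {x : FreeGroup α} (hx : x ≠ 1) : IsCyclic (centralizer {x}) := by
  refine IsFreeGroup.isCyclic_of_center_ne_bot (ne_bot_iff_exists_ne_one.mpr ?_)
  refine ⟨⟨⟨x, mem_centralizer_singleton_iff.mpr rfl⟩, mem_center_iff.mpr fun w => ?_⟩, ?_⟩
  · exact Subtype.ext (mem_centralizer_singleton_iff.mp w.2)
  · simpa [Subtype.ext_iff] using hx

theorem commute_trans {a b c : FreeGroup α} (hb : b ≠ 1) (hab : Commute a b)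
    (hbc : Commute b c) : Commute a c := by
  have := isCyclic_centralizer hb
  have h := mul_comm' (⟨a, mem_centralizer_singleton_iff.mpr hab.eq⟩ : centralizer {b})
    ⟨c, mem_centralizer_singleton_iff.mpr hbc.eq.symm⟩
  exact congrArg Subtype.val h

theorem commute_of_commute_pow {g x : FreeGroup α} {n : ℕ} (hn : n ≠ 0)
    (h : Commute (g ^ n) x) : Commute g x := by
  rcases eq_or_ne g 1 with rfl | hg
  · exact Commute.one_left x
  · exact commute_trans (mt (pow_eq_one_iff_left hn).mp hg) ((Commute.refl g).pow_right n) h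

end FreeGroup

theorem Subgroup.exists_conj_eq_zpow_of_mem_normalizer {G : Type*} [Group G] {H : Subgroup G}
    [IsCyclic H] {g : G} (hg : g ∈ normalizer (H : Set G)) :
    ∃ k : ℤ, ∀ y ∈ H, g * y * g⁻¹ = y ^ k := by
  obtain ⟨k, hk⟩ := (H.normalizerMonoidHom ⟨g, hg⟩).toMonoidHom.map_cyclic
  exact ⟨k, fun y hy => by simpa using congrArg Subtype.val (hk ⟨y, hy⟩)⟩

theorem mul_eq_one_of_conj_eq_zpow {G : Type*} [Group G] [IsMulTorsionFree G] {g x : G}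
    {k j : ℤ} (hx : x ≠ 1) (hk : g * x * g⁻¹ = x ^ k) (hj : g⁻¹ * x * g = x ^ j) :
    k * j = 1 :=
  injective_zpow_iff_not_isOfFinOrder.mpr (not_isOfFinOrder_of_isMulTorsionFree hx) <|
    calc x ^ (k * j) = (g * x * g⁻¹) ^ j := by rw [hk, zpow_mul]
      _ = g * (g⁻¹ * x * g) * g⁻¹ := by rw [conj_zpow, ← hj]
      _ = x ^ (1 : ℤ) := by group

namespace FreeGroup

variable {α : Type*}

theorem normalizer_centralizer {x : FreeGroup α} (hx : x ≠ 1) :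
    normalizer (centralizer {x} : Set (FreeGroup α)) = centralizer {x} := by
  refine le_antisymm (fun g hg => ?_) le_normalizer
  have := isCyclic_centralizer hx
  have hxC : x ∈ centralizer {x} := mem_centralizer_singleton_iff.mpr rfl
  obtain ⟨k, hk⟩ := exists_conj_eq_zpow_of_mem_normalizer hg
  obtain ⟨j, hj⟩ := exists_conj_eq_zpow_of_mem_normalizer (inv_mem hg)
  replace hk := hk x hxC
  replace hj : g⁻¹ * x * g = x ^ j := by simpa using hj x hxC
  rw [mem_centralizer_singleton_iff, ← mul_inv_eq_iff_eq_mul]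
  rcases Int.eq_one_or_neg_one_of_mul_eq_one (mul_eq_one_of_conj_eq_zpow hx hk hj) with rfl | rfl
  · simpa using hk
  · rw [zpow_neg_one] at hk
    have hsq : Commute (g ^ 2) x := by
      rw [Commute, SemiconjBy, ← mul_inv_eq_iff_eq_mul]
      calc g ^ 2 * x * (g ^ 2)⁻¹ = g * (g * x * g⁻¹) * g⁻¹ := by rw [sq]; group
        _ = g * x⁻¹ * g⁻¹ := by rw [hk]
        _ = (g * x * g⁻¹)⁻¹ := by group
        _ = x := by rw [hk, inv_inv]
    rw [(commute_of_commute_pow two_ne_zero hsq).eq, mul_inv_cancel_right, self_eq_inv] at hk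
    exact absurd hk hx

end FreeGroup

section fixedSubgroup

variable {G : Type*} [Group G] (Φ : MulAut G)

@[simp]
theorem mem_fixedSubgroup_iff {x : G} : x ∈ fixedSubgroup Φ ↔ Φ x = x := Iff.rfl

theorem mem_fixedSubgroup_of_zpow_mem [IsMulTorsionFree G] {x : G} {n : ℤ} (hn : n ≠ 0)
    (h : x ^ n ∈ fixedSubgroup Φ) : x ∈ fixedSubgroup Φ :=
  zpow_left_injective hn (by simpa using h)

theorem commute_inv_mul_apply_of_mem_normalizer {g x : G}
    (hg : g ∈ normalizer (fixedSubgroup Φ : Set G)) (hx : x ∈ fixedSubgroup Φ) :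
    Commute (g⁻¹ * Φ g) x := by
  have hconj : Φ (g * x * g⁻¹) = g * x * g⁻¹ := (hg x).mp hx
  rw [map_mul, map_mul, map_inv, (mem_fixedSubgroup_iff Φ).mp hx] at hconj
  rw [Commute, SemiconjBy]
  calc g⁻¹ * Φ g * x = g⁻¹ * (Φ g * x * (Φ g)⁻¹) * Φ g := by group
    _ = x * (g⁻¹ * Φ g) := by rw [hconj]; group

end fixedSubgroup

theorem fixedSubgroup_eq_centralizer_of_commute {α : Type*} {Φ : MulAut (FreeGroup α)}
    (hcomm : ∀ a ∈ fixedSubgroup Φ, ∀ b ∈ fixedSubgroup Φ, Commute a b) {x : FreeGroup α}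
    (hx : x ∈ fixedSubgroup Φ) (hx1 : x ≠ 1) : fixedSubgroup Φ = centralizer {x} := by
  refine le_antisymm (fun y hy => mem_centralizer_singleton_iff.mpr (hcomm y hy x hx).eq) ?_
  obtain ⟨m, hm⟩ := (centralizer {x}).isCyclic_iff_exists_zpowers_eq_top.mp
    (FreeGroup.isCyclic_centralizer hx1)
  obtain ⟨s, rfl⟩ : x ∈ zpowers m := hm ▸ mem_centralizer_singleton_iff.mpr rfl
  have hs : s ≠ 0 := by rintro rfl; exact hx1 (zpow_zero m)
  rw [← hm, zpowers_le]
  exact mem_fixedSubgroup_of_zpow_mem Φ hs hx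

theorem fixedSubgroup_self_normalizing_general {α : Type*}
    (Φ : MulAut (FreeGroup α)) (h : fixedSubgroup Φ ≠ ⊥) :
    Subgroup.normalizer (fixedSubgroup Φ : Set (FreeGroup α)) = fixedSubgroup Φ := by
  by_cases hcomm : ∀ a ∈ fixedSubgroup Φ, ∀ b ∈ fixedSubgroup Φ, Commute a b
  · obtain ⟨x, hx, hx1⟩ := (bot_or_exists_ne_one _).resolve_left h
    rw [fixedSubgroup_eq_centralizer_of_commute hcomm hx hx1, FreeGroup.normalizer_centralizer hx1]
  push Not at hcomm
  obtain ⟨a, ha, b, hb, hab⟩ := hcomm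
  refine le_antisymm (fun g hg => ?_) le_normalizer
  by_contra hg'
  have hc : g⁻¹ * Φ g ≠ 1 := fun hc =>
    hg' ((mem_fixedSubgroup_iff Φ).mpr (inv_mul_eq_one.mp hc).symm)
  exact hab <| FreeGroup.commute_trans hc
    (commute_inv_mul_apply_of_mem_normalizer Φ hg ha).symm
    (commute_inv_mul_apply_of_mem_normalizer Φ hg hb)

/-- The fixed subgroup of an automorphism of a free group of rank at least two,
if nontrivial, is its own normalizer. -/
theorem fixedSubgroup_self_normalizing {α : Type*} [Nontrivial α]
    (Φ : MulAut (FreeGroup α)) (h : fixedSubgroup Φ ≠ ⊥) :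
    Subgroup.normalizer (fixedSubgroup Φ : Set (FreeGroup α)) = fixedSubgroup Φ :=
  fixedSubgroup_self_normalizing_general Φ h
end

section
/- Let F be a free group and H a nontrivial finitely generated subgroup of F. Then H has finite index in its normalizer N_F(H); equivalently, the quotient group N_F(H)/H at the level of index, [N_F(H) : H], is finite. -/
/-!
The normalizer `N` of `H` is free (Nielsen–Schreier) and `H ⊴ N`, so it suffices to show
(Karrass–Solitar) that a nontrivial finitely generated normal subgroup `K = ⟨S⟩` of a free group
`F(X)` has finite index. Fix `1 ≠ u ∈ K`. Every letter occurring in an element of `K` occurs in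
some `s ∈ S`, and conjugating `u` by any letter `x` gives an element of `K` whose reduced word
contains `x`; hence `X` is finite. If `g` is a shortest element of its coset `gK`, comparing `g`
with `gu` and `gu⁻¹` shows `g = g₁c` with `|c| ≤ |u|` and `g₁` a prefix of the reduced word of
`gug⁻¹ ∈ K`. A prefix of an element of `⟨S⟩` has the form `kQ` with `k ∈ K` and `|Q| ≤ max |s|`,
so by normality `gK = QcK`: every coset has a representative of length at most `max |s| + |u|`.
-/

open List

namespace FreeGroup

variable {α : Type*}

section Words

variable [DecidableEq α]

theorem IsReduced.exists_reduce_append {L₁ L₂ : List (α × Bool)} (h₁ : IsReduced L₁)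
    (h₂ : IsReduced L₂) :
    ∃ p c q, L₁ = p ++ c ∧ L₂ = invRev c ++ q ∧ reduce (L₁ ++ L₂) = p ++ q := by
  induction L₁ using List.reverseRecOn generalizing L₂ with
  | nil => exact ⟨[], [], L₂, rfl, rfl, h₂.reduce_eq⟩
  | append_singleton L₁ x ih =>
    cases L₂ with
    | nil => exact ⟨L₁ ++ [x], [], [], by simp, rfl, by simpa using h₁.reduce_eq⟩
    | cons y L₂ =>
      by_cases hxy : y = (x.1, !x.2)
      · obtain ⟨p, c, q, rfl, rfl, hpq⟩ :=
          ih (h₁.infix ⟨[], [x], rfl⟩) (h₂.infix (L₁ := L₂) ⟨[y], [], by simp⟩)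
        refine ⟨p, c ++ [x], q, by simp, by simp [hxy, invRev], ?_⟩
        rw [← hpq, hxy]
        apply reduce.Step.eq
        simpa using Red.Step.not (L₁ := p ++ c) (L₂ := invRev c ++ q) (x := x.1) (b := x.2)
      · refine ⟨L₁ ++ [x], [], y :: L₂, by simp, rfl, IsReduced.reduce_eq ?_⟩
        refine IsReduced.append_overlap h₁ (isReduced_cons_cons.mpr ⟨fun h => ?_, h₂⟩)
          (cons_ne_nil x [])
        exact by_contra fun h' => hxy (Prod.ext h.symm (Bool.eq_not.mpr (Ne.symm h')))

theorem exists_toWord_mul (x y : FreeGroup α) :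
    ∃ p c q, x.toWord = p ++ c ∧ y.toWord = invRev c ++ q ∧ (x * y).toWord = p ++ q := by
  rw [toWord_mul]
  exact isReduced_toWord.exists_reduce_append isReduced_toWord

theorem prefix_toWord_mul {x y : FreeGroup α} {P : List (α × Bool)}
    (hP : P <+: (x * y).toWord) :
    P <+: x.toWord ∨ ∃ Q, Q <+: y.toWord ∧ mk P = x * mk Q := by
  obtain ⟨p, c, q, hx, hy, hxy⟩ := exists_toWord_mul x y
  rw [hxy] at hP
  rcases le_or_gt P.length p.length with hl | hl
  · exact .inl ((prefix_of_prefix_length_le hP (prefix_append p q) hl).trans ⟨c, hx.symm⟩)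
  · obtain ⟨t, rfl⟩ := prefix_of_prefix_length_le (prefix_append p q) hP hl.le
    refine .inr ⟨invRev c ++ t, hy ▸ (prefix_append_right_inj _).mpr
      ((prefix_append_right_inj p).mp hP), ?_⟩
    rw [← mk_toWord (x := x), hx, ← mul_mk, ← mul_mk, ← mul_mk, ← inv_mk, mul_assoc,
      mul_inv_cancel_left]

theorem exists_mul_mk_of_prefix_toWord {S : Set (FreeGroup α)} {n : ℕ}
    (hS : ∀ s ∈ S, norm s ≤ n) {g : FreeGroup α} (hg : g ∈ Subgroup.closure S)
    {P : List (α × Bool)} (hP : P <+: g.toWord) :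
    ∃ k ∈ Subgroup.closure S, ∃ Q : List (α × Bool), Q.length ≤ n ∧ mk P = k * mk Q := by
  induction hg using Subgroup.closure_induction'' generalizing P with
  | mem s hs => exact ⟨1, one_mem _, P, hP.length_le.trans (hS s hs), (one_mul _).symm⟩
  | inv_mem s hs =>
    exact ⟨1, one_mem _, P, hP.length_le.trans (norm_inv_eq.trans_le (hS s hs)),
      (one_mul _).symm⟩
  | one => exact ⟨1, one_mem _, [], by simp, by simp [eq_nil_of_prefix_nil hP]⟩
  | mul x y hx hy ihx ihy =>
    rcases prefix_toWord_mul hP with hPx | ⟨Q, hQ, hPQ⟩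
    · exact ihx hPx
    · obtain ⟨k, hk, Q', hQ', hQQ'⟩ := ihy hQ
      exact ⟨x * k, mul_mem hx hk, Q', hQ', by rw [hPQ, hQQ', mul_assoc]⟩

theorem norm_mul_inv_lt_of_toWord_eq {g u : FreeGroup α} (hu : u ≠ 1) {X c t : List (α × Bool)}
    (hg : g.toWord = X ++ t) (hu' : u.toWord = invRev c ++ t) (hc : c <:+ g.toWord)
    (hct : c.length ≤ t.length) : norm (g * u⁻¹) < norm g := by
  have hgu : g * u⁻¹ = mk (X ++ c) := by
    rw [← mk_toWord (x := g), ← mk_toWord (x := u), hg, hu', inv_mk, invRev_append,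
      invRev_invRev, ← mul_mk, ← mul_mk, ← mul_mk, ← inv_mk]
    group
  rcases hct.lt_or_eq with hlt | heq
  · calc norm (g * u⁻¹) ≤ (X ++ c).length := hgu ▸ norm_mk_le
      _ < (X ++ t).length := by simp [hlt]
      _ = norm g := by rw [norm, hg]
  · have hct : c = t := (suffix_of_suffix_length_le hc ⟨X, hg.symm⟩ heq.le).eq_of_length heq
    refine absurd ?_ hu
    rw [← mk_toWord (x := u), hu', hct, ← mul_mk, ← inv_mk, inv_mul_cancel]

theorem exists_prefix_toWord_conj {g u : FreeGroup α} (hu : u ≠ 1)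
    (hmul : norm g ≤ norm (g * u)) (hmul_inv : norm g ≤ norm (g * u⁻¹)) :
    ∃ g₁ c, g.toWord = g₁ ++ c ∧ c.length ≤ norm u ∧ g₁ <+: (g * u * g⁻¹).toWord := by
  obtain ⟨g₁, c, t, hg, hu', hgu⟩ := exists_toWord_mul g u
  have hct : c.length ≤ t.length := by
    simp only [norm, hg, hgu, length_append] at hmul
    omega
  refine ⟨g₁, c, hg, by simp [norm, hu'], ?_⟩
  obtain ⟨A, e, B, hgu', hginv, hw⟩ := exists_toWord_mul (g * u) g⁻¹
  have hlen : g₁.length + t.length = A.length + e.length := by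
    simpa using congrArg length (hgu.symm.trans hgu')
  rcases le_or_gt e.length t.length with het | het
  · rw [hw]
    exact (prefix_of_prefix_length_le (hgu ▸ prefix_append g₁ t) (hgu' ▸ prefix_append A e)
      (by omega)).trans (prefix_append A B)
  · -- Otherwise `g⁻¹` cancels all of `t`, so `g` ends in `t` and `gu⁻¹` would be shorter.
    have he : e <:+ g.toWord := ⟨invRev B, by
      rw [← invRev_invRev (L₁ := g.toWord), ← toWord_inv, hginv, invRev_append, invRev_invRev]⟩
    obtain ⟨X, hX⟩ := (suffix_of_suffix_length_le (hgu ▸ suffix_append g₁ t)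
      (hgu' ▸ suffix_append A e) het.le).trans he
    exact absurd hmul_inv (not_le.mpr
      (norm_mul_inv_lt_of_toWord_eq hu hX.symm hu' ⟨g₁, hg.symm⟩ hct))

theorem exists_norm_le_mk_eq {K : Subgroup (FreeGroup α)} [K.Normal] {S : Set (FreeGroup α)}
    (hS : Subgroup.closure S = K) {n : ℕ} (hSn : ∀ s ∈ S, norm s ≤ n) {u : FreeGroup α}
    (hu : u ∈ K) (hu1 : u ≠ 1) (x : FreeGroup α ⧸ K) :
    ∃ v : FreeGroup α, norm v ≤ n + norm u ∧ (v : FreeGroup α ⧸ K) = x := by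
  set C : Set (FreeGroup α) := {g | (g : FreeGroup α ⧸ K) = x}
  have hC : C.Nonempty := QuotientGroup.mk_surjective x
  set g := Function.argminOn norm C hC
  have hgC : (g : FreeGroup α ⧸ K) = x := Function.argminOn_mem norm C hC
  have hmin : ∀ k ∈ K, norm g ≤ norm (g * k) := fun k hk =>
    Function.argminOn_le norm C <| show ((g * k : FreeGroup α) : FreeGroup α ⧸ K) = x by
      rw [QuotientGroup.mk_mul, (QuotientGroup.eq_one_iff k).mpr hk, mul_one, hgC]
  obtain ⟨g₁, c, hg, hc, hpre⟩ :=
    exists_prefix_toWord_conj hu1 (hmin u hu) (hmin u⁻¹ (inv_mem hu))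
  have hconj : g * u * g⁻¹ ∈ Subgroup.closure S := hS ▸ Subgroup.Normal.conj_mem ‹_› u hu g
  obtain ⟨k, hk, Q, hQ, hg₁⟩ := exists_mul_mk_of_prefix_toWord hSn hconj hpre
  refine ⟨mk (Q ++ c), ?_, ?_⟩
  · calc norm (mk (Q ++ c)) ≤ (Q ++ c).length := norm_mk_le
      _ ≤ n + norm u := by simp only [length_append]; omega
  · have hgk : g = k * mk (Q ++ c) := by
      rw [← mk_toWord (x := g), hg, ← mul_mk, hg₁, mul_assoc, mul_mk]
    rw [← hgC, hgk, QuotientGroup.mk_mul, (QuotientGroup.eq_one_iff k).mpr (hS ▸ hk), one_mul]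

end Words

theorem mem_toWord_of_mul_mul_of_inv [DecidableEq α] {a : α} {u : FreeGroup α} (hu : u ≠ 1)
    (ha : ∀ p ∈ u.toWord, p.1 ≠ a) : (a, true) ∈ (of a * u * (of a)⁻¹).toWord := by
  obtain ⟨z, L, hzL⟩ := exists_cons_of_ne_nil (mt toWord_eq_nil_iff.mp hu)
  have hred : IsReduced ((a, true) :: (u.toWord ++ [(a, false)])) := by
    rw [IsReduced, isChain_cons, isChain_append]
    refine ⟨?_, isReduced_toWord, isChain_singleton _, ?_⟩
    · simp only [hzL, cons_append, head?_cons, Option.mem_def, Option.some.injEq]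
      rintro _ rfl h
      exact absurd h.symm (ha z (by simp [hzL]))
    · intro p hp q hq h
      obtain rfl : (a, false) = q := by simpa using hq
      exact absurd h (ha p (mem_of_mem_getLast? hp))
  have hw : of a * u * (of a)⁻¹ = mk ((a, true) :: (u.toWord ++ [(a, false)])) := by
    rw [← mk_toWord (x := u), of, inv_mk, mul_mk, mul_mk]
    simp [invRev]
  rw [hw, toWord_mk, hred.reduce_eq]
  exact mem_cons_self

theorem finite_of_normal_of_fg {K : Subgroup (FreeGroup α)} [K.Normal] (hK : K ≠ ⊥)
    (hfg : K.FG) : Finite α := by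
  classical
  obtain ⟨S, hS⟩ := hfg
  set A : Finset α := S.biUnion fun s => (s.toWord.map Prod.fst).toFinset
  have hA : ∀ k ∈ K, ∀ p ∈ k.toWord, p.1 ∈ A := by
    intro k hk
    rw [← hS] at hk
    induction hk using Subgroup.closure_induction with
    | mem s hs =>
      exact fun p hp => Finset.mem_biUnion.mpr ⟨s, hs, mem_toFinset.mpr (mem_map_of_mem hp)⟩
    | one => simp
    | mul x y _ _ hx hy =>
      intro p hp
      rcases mem_append.mp ((toWord_mul_sublist x y).mem hp) with h | h
      exacts [hx p h, hy p h]
    | inv x _ hx =>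
      intro p hp
      rw [toWord_inv, invRev, mem_reverse, mem_map] at hp
      obtain ⟨q, hq, rfl⟩ := hp
      exact hx q hq
  obtain ⟨u, hu, hu1⟩ := K.bot_or_exists_ne_one.resolve_left hK
  refine Set.finite_univ_iff.mp (A.finite_toSet.subset fun a _ => by_contra fun ha => ha ?_)
  exact hA _ (Subgroup.Normal.conj_mem ‹_› u hu (of a)) _
    (mem_toWord_of_mul_mul_of_inv hu1 fun p hp h => ha (h ▸ hA u hu p hp))

theorem finiteIndex_of_normal_of_fg {K : Subgroup (FreeGroup α)} [K.Normal] (hK : K ≠ ⊥)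
    (hfg : K.FG) : K.FiniteIndex := by
  classical
  have : Finite α := finite_of_normal_of_fg hK hfg
  obtain ⟨S, hS⟩ := hfg
  obtain ⟨u, hu, hu1⟩ := K.bot_or_exists_ne_one.resolve_left hK
  set n := S.sup norm
  have : Finite {L : List (α × Bool) // L.length ≤ n + norm u} :=
    (List.finite_length_le _ _).to_subtype
  have : Finite (FreeGroup α ⧸ K) := by
    refine Finite.of_surjective (fun L : {L : List (α × Bool) // L.length ≤ n + norm u} =>
      (mk L.1 : FreeGroup α ⧸ K)) fun x => ?_
    obtain ⟨v, hv, hvx⟩ := exists_norm_le_mk_eq hS (fun s hs => Finset.le_sup hs) hu hu1 x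
    exact ⟨⟨v.toWord, hv⟩, show ((mk v.toWord : FreeGroup α) : FreeGroup α ⧸ K) = x by
      rw [mk_toWord, hvx]⟩
  exact Subgroup.finiteIndex_of_finite_quotient

end FreeGroup

theorem IsFreeGroup.finiteIndex_of_normal_of_fg {G : Type*} [Group G] [IsFreeGroup G]
    {K : Subgroup G} [hn : K.Normal] (hK : K ≠ ⊥) (hfg : K.FG) : K.FiniteIndex := by
  classical
  let e : G →* FreeGroup (IsFreeGroup.Generators G) := IsFreeGroup.toFreeGroup G
  have : (K.map e).Normal := hn.map e (IsFreeGroup.toFreeGroup G).surjective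
  have hK' : K.map e ≠ ⊥ :=
    mt (Subgroup.map_eq_bot_iff_of_injective _ (IsFreeGroup.toFreeGroup G).injective).mp hK
  have hfg' : (K.map e).FG := by
    obtain ⟨S, rfl⟩ := hfg
    exact ⟨S.image e, by rw [MonoidHom.map_closure, Finset.coe_image]⟩
  have := FreeGroup.finiteIndex_of_normal_of_fg hK' hfg'
  rw [Subgroup.finiteIndex_iff, ← Subgroup.index_map_equiv K (IsFreeGroup.toFreeGroup G)]
  exact Subgroup.FiniteIndex.index_ne_zero

/-- A nontrivial finitely generated subgroup of a free group has finite index in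
its normalizer. -/
theorem finiteIndex_in_normalizer {α : Type*} (H : Subgroup (FreeGroup α))
    (hne : H ≠ ⊥) (hfg : H.FG) :
    (H.subgroupOf (Subgroup.normalizer (H : Set (FreeGroup α)))).FiniteIndex := by
  have hle : H ≤ Subgroup.normalizer (H : Set (FreeGroup α)) := Subgroup.le_normalizer
  have : (H.subgroupOf (Subgroup.normalizer (H : Set (FreeGroup α)))).Normal :=
    Subgroup.normal_in_normalizer
  refine IsFreeGroup.finiteIndex_of_normal_of_fg ?_ ?_
  · rwa [Ne, Subgroup.subgroupOf_eq_bot, disjoint_of_le_iff_left_eq_bot hle]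
  · have : Group.FG H := (Group.fg_iff_subgroup_fg H).mpr hfg
    exact (Group.fg_iff_subgroup_fg _).mp
      (Group.fg_of_surjective (f := ((Subgroup.subgroupOfEquivOfLe hle).symm : H →* _))
        (MulEquiv.surjective _))
end

section
/- Let F be a finitely generated free group and let K ≤ H ≤ F with K and H finitely generated. Then there are only finitely many H-conjugacy classes of subgroups L ≤ H such that L is conjugate to K in F; i.e. the set { [L]_H : L ≤ H and gKg⁻¹ = L for some g ∈ F } of H-conjugacy classes is finite. -/
/-!
Let `g K g⁻¹ ≤ H = ⟨S⟩`, pick `1 ≠ k ∈ K`, write `k = t c t⁻¹` with `c` cyclically reduced and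
put `u = g t`. Every prefix of the reduced word of an element of `H` lies in a coset `H q` with
`q` a prefix of some `s^{±1}`, `s ∈ S`: these cosets are the vertices of the Stallings graph of
`H`, and reading a word of `H` there visits only them. For `m > |u|` the cancellation in `u c^m`
and in `c^m u⁻¹` stays inside `c^m`, so, `c` being cyclically reduced, `u c^m` is a prefix of the
reduced word of `u c^(2m) u⁻¹ ∈ H`. As `u c^m u⁻¹ ∈ H` too, `u ∈ H q`. Hence `g` lies in one of
finitely many cosets `H q t⁻¹`, and `g K g⁻¹` is `H`-conjugate to `(q t⁻¹) K (q t⁻¹)⁻¹`.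
-/

namespace FreeGroup

variable {α : Type*} [DecidableEq α]

theorem IsReduced.toWord_mk {L : List (α × Bool)} (h : IsReduced L) : (mk L).toWord = L := by
  rw [FreeGroup.toWord_mk, h.reduce_eq]

theorem toWord_mk_of_isPrefix {L : List (α × Bool)} {x : FreeGroup α} (h : L <+: x.toWord) :
    (mk L).toWord = L :=
  (isReduced_toWord.infix h.isInfix).toWord_mk

theorem IsReduced.exists_cancel {u v : List (α × Bool)} (hu : IsReduced u) (hv : IsReduced v) :
    ∃ a c b, u = a ++ c ∧ v = invRev c ++ b ∧ IsReduced (a ++ b) := by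
  induction u with
  | nil => exact ⟨[], [], v, rfl, rfl, hv⟩
  | cons z u ih =>
    obtain ⟨a, c, b, rfl, rfl, hab⟩ := ih (hu.infix (List.suffix_cons z _).isInfix)
    rcases a with _ | ⟨a₀, a⟩
    · rcases b with _ | ⟨y, b⟩
      · exact ⟨[z], c, [], rfl, by simp, .singleton⟩
      by_cases hzy : z.1 = y.1 ∧ z.2 = !y.2
      · refine ⟨[], z :: c, b, rfl, ?_, hab.infix (List.suffix_cons y b).isInfix⟩
        simp [invRev, hzy.1, hzy.2]
      · exact ⟨[z], c, y :: b, rfl, rfl,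
          isReduced_cons_cons.2 ⟨fun h => by simpa using not_and.1 hzy h, hab⟩⟩
    · exact ⟨z :: a₀ :: a, c, b, rfl, rfl,
        IsReduced.append_overlap (L₁ := [z]) (hu.infix ⟨[], c, by simp⟩) hab (by simp)⟩

theorem exists_toWord_mul_eq_append (x y : FreeGroup α) :
    ∃ a c b, x.toWord = a ++ c ∧ y.toWord = invRev c ++ b ∧ (x * y).toWord = a ++ b := by
  obtain ⟨a, c, b, hx, hy, hab⟩ := isReduced_toWord.exists_cancel (isReduced_toWord (x := y))
  refine ⟨a, c, b, hx, hy, ?_⟩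
  rw [← hab.toWord_mk, ← mk_toWord (x := x), ← mk_toWord (x := y), hx, hy, ← mul_mk, ← mul_mk,
    ← inv_mk, ← mul_mk]
  group

theorem isPrefix_toWord_or_of_isPrefix_toWord_mul {x y p : FreeGroup α}
    (h : p.toWord <+: (x * y).toWord) : p.toWord <+: x.toWord ∨ (x⁻¹ * p).toWord <+: y.toWord := by
  obtain ⟨a, c, b, hx, hy, hxy⟩ := exists_toWord_mul_eq_append x y
  rw [hxy] at h
  rcases List.prefix_or_prefix_of_prefix h (List.prefix_append a b) with hpa | ⟨t, ht⟩
  · exact .inl (hpa.trans (hx ▸ List.prefix_append a c))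
  · right
    have htb : t <+: b := by rw [← ht] at h; exact (List.prefix_append_right_inj a).1 h
    have hct : invRev c ++ t <+: y.toWord := hy ▸ (List.prefix_append_right_inj _).2 htb
    have hp : x⁻¹ * p = mk (invRev c ++ t) := by
      rw [← mk_toWord (x := x), ← mk_toWord (x := p), hx, ← ht, ← mul_mk, ← mul_mk, ← mul_mk,
        ← inv_mk]
      group
    rwa [hp, toWord_mk_of_isPrefix hct]

def prefixes (x : FreeGroup α) : Finset (FreeGroup α) :=
  (x.toWord.inits.map mk).toFinset

theorem mem_prefixes {p x : FreeGroup α} : p ∈ prefixes x ↔ p.toWord <+: x.toWord := by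
  simp only [prefixes, List.mem_toFinset, List.mem_map, List.mem_inits]
  refine ⟨?_, fun h => ⟨_, h, mk_toWord⟩⟩
  rintro ⟨L, hL, rfl⟩
  rwa [toWord_mk_of_isPrefix hL]

def generatorPrefixes (S : Finset (FreeGroup α)) : Finset (FreeGroup α) :=
  (insert 1 (S ∪ S.image (·⁻¹))).biUnion prefixes

theorem exists_mem_generatorPrefixes_mul_inv_mem_closure (S : Finset (FreeGroup α))
    {h p : FreeGroup α} (hh : h ∈ Subgroup.closure (S : Set (FreeGroup α)))
    (hp : p.toWord <+: h.toWord) :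
    ∃ q ∈ generatorPrefixes S, p * q⁻¹ ∈ Subgroup.closure (S : Set (FreeGroup α)) := by
  have of_mem {t p : FreeGroup α} (ht : t ∈ insert 1 (S ∪ S.image (·⁻¹)))
      (hp : p.toWord <+: t.toWord) :
      ∃ q ∈ generatorPrefixes S, p * q⁻¹ ∈ Subgroup.closure (S : Set (FreeGroup α)) :=
    ⟨p, Finset.mem_biUnion.2 ⟨t, ht, mem_prefixes.2 hp⟩, by simp [one_mem]⟩
  induction hh using Subgroup.closure_induction'' generalizing p with
  | mem s hs => exact of_mem (by simp [Finset.mem_coe.1 hs]) hp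
  | inv_mem s hs => exact of_mem (by simp [Finset.mem_coe.1 hs]) hp
  | one => exact of_mem (by simp) hp
  | mul x y hx _ ihx ihy =>
    rcases isPrefix_toWord_or_of_isPrefix_toWord_mul hp with hpx | hpy
    · exact ihx hpx
    · obtain ⟨q, hq, hpq⟩ := ihy hpy
      refine ⟨q, hq, ?_⟩
      simpa [mul_assoc] using mul_mem hx hpq

theorem exists_conj_isCyclicallyReduced (x : FreeGroup α) :
    ∃ t c : FreeGroup α, IsCyclicallyReduced c.toWord ∧ x = t * c * t⁻¹ := by
  have hc := reduceCyclically.isCyclicallyReduced (isReduced_toWord (x := x))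
  refine ⟨mk (reduceCyclically.conjugator x.toWord), mk (reduceCyclically x.toWord), ?_, ?_⟩
  · rwa [hc.isReduced.toWord_mk]
  · rw [inv_mk, mul_mk, mul_mk, reduceCyclically.conj_conjugator_reduceCyclically, mk_toWord]

theorem toWord_pow_of_isCyclicallyReduced {c : FreeGroup α} (hc : IsCyclicallyReduced c.toWord)
    (n : ℕ) : (c ^ n).toWord = (List.replicate n c.toWord).flatten := by
  rw [toWord_pow, (hc.flatten_replicate n).isReduced.reduce_eq]

theorem getLast?_toWord_mul_of_length_lt {x y : FreeGroup α}
    (h : x.toWord.length < y.toWord.length) :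
    (x * y).toWord.getLast? = y.toWord.getLast? := by
  obtain ⟨a, c, b, hx, hy, hxy⟩ := exists_toWord_mul_eq_append x y
  have hb : b ≠ [] := by
    rintro rfl
    simp only [hx, hy, List.length_append, invRev_length, List.length_nil] at h
    omega
  rw [hxy, hy, List.getLast?_append_of_ne_nil _ hb, List.getLast?_append_of_ne_nil _ hb]

theorem head?_toWord_mul_of_length_lt {x y : FreeGroup α}
    (h : y.toWord.length < x.toWord.length) :
    (x * y).toWord.head? = x.toWord.head? := by
  obtain ⟨a, c, b, hx, hy, hxy⟩ := exists_toWord_mul_eq_append x y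
  have ha : a ≠ [] := by
    rintro rfl
    simp only [hx, hy, List.length_append, invRev_length, List.length_nil] at h
    omega
  rw [hxy, hx, List.head?_append_of_ne_nil _ ha, List.head?_append_of_ne_nil _ ha]

theorem isPrefix_toWord_conj_pow {c g : FreeGroup α} {m : ℕ} (hc : IsCyclicallyReduced c.toWord)
    (hm : g.toWord.length < (c ^ m).toWord.length) :
    (g * c ^ m).toWord <+: (g * c ^ (m + m) * g⁻¹).toWord := by
  have hm0 : m ≠ 0 := by rintro rfl; simp at hm
  have hlast : (g * c ^ m).toWord.getLast? = c.toWord.getLast? := by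
    rw [getLast?_toWord_mul_of_length_lt hm, toWord_pow_of_isCyclicallyReduced hc,
      List.getLast?_flatten_replicate hm0]
  have hhead : (c ^ m * g⁻¹).toWord.head? = c.toWord.head? := by
    rw [head?_toWord_mul_of_length_lt (by rwa [toWord_inv, invRev_length]),
      toWord_pow_of_isCyclicallyReduced hc, List.head?_flatten_replicate hm0]
  have hred : IsReduced ((g * c ^ m).toWord ++ (c ^ m * g⁻¹).toWord) :=
    List.isChain_append.2 ⟨isReduced_toWord, isReduced_toWord,
      fun a ha b hb => hc.2 a (hlast ▸ ha) b (hhead ▸ hb)⟩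
  have hsplit : g * c ^ (m + m) * g⁻¹ = g * c ^ m * (c ^ m * g⁻¹) := by group
  rw [hsplit, toWord_mul (g * c ^ m), hred.reduce_eq]
  exact List.prefix_append _ _

theorem exists_mem_generatorPrefixes_mul_inv_mem_closure_of_conj_mem (S : Finset (FreeGroup α))
    {c g : FreeGroup α} (hc : IsCyclicallyReduced c.toWord) (hc1 : c ≠ 1)
    (hg : g * c * g⁻¹ ∈ Subgroup.closure (S : Set (FreeGroup α))) :
    ∃ q ∈ generatorPrefixes S, g * q⁻¹ ∈ Subgroup.closure (S : Set (FreeGroup α)) := by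
  set m := g.toWord.length + 1
  have hpow (n : ℕ) : g * c ^ n * g⁻¹ ∈ Subgroup.closure (S : Set (FreeGroup α)) := by
    rw [← conj_pow]; exact pow_mem hg n
  have hlen : g.toWord.length < (c ^ m).toWord.length := by
    have hc0 : c.toWord.length ≠ 0 := by simpa using hc1
    simp only [toWord_pow_of_isCyclicallyReduced hc, List.length_flatten, List.map_replicate,
      List.sum_replicate, smul_eq_mul]
    exact (Nat.lt_succ_self _).trans_le (Nat.le_mul_of_pos_right m (Nat.pos_of_ne_zero hc0))
  obtain ⟨q, hq, hgq⟩ := exists_mem_generatorPrefixes_mul_inv_mem_closure S (hpow (m + m))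
    (isPrefix_toWord_conj_pow hc hlen)
  refine ⟨q, hq, ?_⟩
  have hsplit : g * q⁻¹ = (g * c ^ m * g⁻¹)⁻¹ * (g * c ^ m * q⁻¹) := by group
  rw [hsplit]
  exact mul_mem (inv_mem (hpow m)) hgq

theorem exists_finset_mul_inv_mem_of_conj_mem {H : Subgroup (FreeGroup α)} (hH : H.FG)
    {k : FreeGroup α} (hk : k ≠ 1) :
    ∃ R : Finset (FreeGroup α), ∀ g, g * k * g⁻¹ ∈ H → ∃ q ∈ R, g * q⁻¹ ∈ H := by
  obtain ⟨S, rfl⟩ := hH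
  obtain ⟨t, c, hc, rfl⟩ := exists_conj_isCyclicallyReduced k
  have hc1 : c ≠ 1 := by rintro rfl; simp at hk
  refine ⟨(generatorPrefixes S).image (· * t⁻¹), fun g hg => ?_⟩
  obtain ⟨q, hq, hgq⟩ := exists_mem_generatorPrefixes_mul_inv_mem_closure_of_conj_mem S hc hc1
    (g := g * t) (by simpa [mul_assoc] using hg)
  exact ⟨q * t⁻¹, Finset.mem_image_of_mem _ hq, by simpa [mul_assoc] using hgq⟩

end FreeGroup

theorem finitely_many_H_conjugacy_classes_general {α : Type*}
    (H K : Subgroup (FreeGroup α)) (hH : H.FG) :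
    ∃ s : Finset (Subgroup (FreeGroup α)),
      ∀ L : Subgroup (FreeGroup α), L ≤ H →
        (∃ g : FreeGroup α, L = K.map (MulAut.conj g).toMonoidHom) →
        ∃ L' ∈ s, ∃ h ∈ H, L = L'.map (MulAut.conj h).toMonoidHom := by
  classical
  obtain rfl | ⟨k, hkK, hk⟩ := K.bot_or_exists_ne_one
  · exact ⟨{⊥}, fun L _ ⟨g, hL⟩ => ⟨⊥, by simp, 1, H.one_mem, by simp [hL]⟩⟩
  obtain ⟨R, hR⟩ := FreeGroup.exists_finset_mul_inv_mem_of_conj_mem hH hk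
  refine ⟨R.image fun q => K.map (MulAut.conj q).toMonoidHom, ?_⟩
  rintro L hLH ⟨g, rfl⟩
  obtain ⟨q, hqR, hgq⟩ := hR g (hLH (Subgroup.mem_map_of_mem _ hkK))
  refine ⟨_, Finset.mem_image_of_mem _ hqR, g * q⁻¹, hgq, ?_⟩
  rw [Subgroup.map_map]
  congr 1
  ext x
  simp [mul_assoc]

/-- In a finitely generated free group `F`, a conjugacy class of a finitely
generated subgroup `K ≤ H` splits into only finitely many `H`-conjugacy classes:
there is a finite set of subgroups so that every subgroup of `H` that is
`F`-conjugate to `K` is `H`-conjugate to one of them. -/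
theorem finitely_many_H_conjugacy_classes {α : Type*} [Finite α]
    (H K : Subgroup (FreeGroup α)) (hKH : K ≤ H) (hK : K.FG) (hH : H.FG) :
    ∃ s : Finset (Subgroup (FreeGroup α)),
      ∀ L : Subgroup (FreeGroup α), L ≤ H →
        (∃ g : FreeGroup α, L = K.map (MulAut.conj g).toMonoidHom) →
        ∃ L' ∈ s, ∃ h ∈ H, L = L'.map (MulAut.conj h).toMonoidHom :=
  finitely_many_H_conjugacy_classes_general H K hH
end
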